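/- Let μ, ν ∈ C be such that ν − μ ∈ C*, i.e. ⟨ν − μ, ρ⟩ ≥ 0 for every ρ ∈ C. Then for every nondecreasing, convex, Lipschitz function φ : ℝ → ℝ, one has ∫₀¹ φ( μ(s) ) ds ≤ ∫₀¹ φ( ν(s) ) ds. -/

import Mathlib

open MeasureTheory

/-- Lebesgue measure restricted to `[0,1)`. -/
noncomputable def mu0 : Measure ℝ := volume.restrict (Set.Ico (0 : ℝ) 1)

/-- The Hilbert space `H = L²([0,1))`. -/
noncomputable abbrev Hsp : Type := Lp ℝ 2 mu0

/-- The cone `C ⊂ H` of (classes of) functions with a nondecreasing nonnegative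
representative on `[0,1)`. -/
def coneC : Set Hsp :=
  {f | ∃ g : ℝ → ℝ, MonotoneOn g (Set.Ico 0 1) ∧ (∀ x ∈ Set.Ico (0 : ℝ) 1, 0 ≤ g x) ∧
    (f : ℝ → ℝ) =ᵐ[mu0] g}


/-- The dual cone `C*` of `C` in `H`. -/
noncomputable def dualC : Set Hsp := {ι | ∀ ρ ∈ coneC, 0 ≤ inner (𝕜 := ℝ) ι ρ}

/-!
Let `ψ` be the right derivative of `φ`. By convexity it is a nondecreasing subgradient,
`φ a + ψ a * (b - a) ≤ φ b`, so `∫ φ ∘ ν - ∫ φ ∘ μ ≥ ∫ ψ ∘ μ * (ν - μ) = ⟨ν - μ, ψ ∘ μ⟩`.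
As `φ` is nondecreasing and `K`-Lipschitz, `ψ` takes values in `[0, K]`, so `ψ ∘ μ` is again a
nonnegative nondecreasing element of `H`, i.e. lies in `C`, and the pairing is nonnegative
because `ν - μ ∈ C*`.
-/

open Set

namespace ConvexOn

variable {f : ℝ → ℝ}

theorem add_rightDeriv_mul_sub_le (hf : ConvexOn ℝ univ f) (x y : ℝ) :
    f x + derivWithin f (Ioi x) x * (y - x) ≤ f y := by
  rcases lt_trichotomy x y with hxy | rfl | hyx
  · have h := hf.rightDeriv_le_slope_of_mem_interior (by simp) (mem_univ y) hxy
    rw [slope_def_field, le_div_iff₀ (sub_pos.2 hxy)] at h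
    linarith
  · simp
  · have h := (hf.slope_le_leftDeriv_of_mem_interior (mem_univ y) (by simp) hyx).trans
      (hf.leftDeriv_le_rightDeriv_of_mem_interior (by simp))
    rw [slope_def_field, div_le_iff₀ (sub_pos.2 hyx)] at h
    linarith

theorem monotone_rightDeriv (hf : ConvexOn ℝ univ f) :
    Monotone fun x ↦ derivWithin f (Ioi x) x := by
  simpa using hf.monotoneOn_rightDeriv

theorem rightDeriv_le_of_lipschitzWith (hf : ConvexOn ℝ univ f) {K : NNReal}
    (hK : LipschitzWith K f) (x : ℝ) : derivWithin f (Ioi x) x ≤ K :=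
  calc derivWithin f (Ioi x) x ≤ slope f x (x + 1) :=
        hf.rightDeriv_le_slope_of_mem_interior (by simp) (mem_univ _) (lt_add_one x)
    _ = f (x + 1) - f x := by simp [slope_def_field]
    _ ≤ K := by simpa [Real.dist_eq] using sub_le_iff_le_add'.2 (hK.le_add_mul (x + 1) x)

end ConvexOn

theorem LipschitzWith.integrable_comp {α E F : Type*} [MeasurableSpace α] {μ : Measure α}
    [IsFiniteMeasure μ] [NormedAddCommGroup E] [NormedAddCommGroup F] {g : E → F} {K : NNReal}
    (hg : LipschitzWith K g) {f : α → E} (hf : Integrable f μ) : Integrable (g ∘ f) μ := by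
  refine ((integrable_const ‖g 0‖).add (hf.norm.const_mul K)).mono'
    (hg.continuous.comp_aestronglyMeasurable hf.1) (Filter.Eventually.of_forall fun a ↦ ?_)
  calc ‖g (f a)‖ ≤ ‖g 0‖ + ‖g (f a) - g 0‖ := norm_le_insert' _ _
    _ ≤ ‖g 0‖ + K * ‖f a‖ := by simpa using hg.norm_sub_le (f a) 0

theorem Monotone.comp_aestronglyMeasurable {α : Type*} [MeasurableSpace α] {m : Measure α}
    {ψ : ℝ → ℝ} (hψ : Monotone ψ) {f : α → ℝ} (hf : AEStronglyMeasurable f m) :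
    AEStronglyMeasurable (ψ ∘ f) m :=
  (hψ.measurable.comp_aemeasurable hf.aemeasurable).aestronglyMeasurable

instance : IsFiniteMeasure mu0 := by
  unfold mu0
  infer_instance

theorem Hsp.integrable (f : Hsp) : Integrable f mu0 :=
  (Lp.memLp f).integrable one_le_two

theorem integral_comp_mul_nonneg_of_mem_dualC {ι f : Hsp} (hι : ι ∈ dualC) (hf : f ∈ coneC)
    {ψ : ℝ → ℝ} (hψ : Monotone ψ) (hψ0 : ∀ x, 0 ≤ ψ x) {C : ℝ} (hψC : ∀ x, ψ x ≤ C) :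
    0 ≤ ∫ s, ψ (f s) * ι s ∂mu0 := by
  obtain ⟨g, hg_mono, -, hfg⟩ := hf
  have hψf : MemLp (ψ ∘ f) 2 mu0 :=
    .of_bound (hψ.comp_aestronglyMeasurable (Lp.aestronglyMeasurable f)) C
      (Filter.Eventually.of_forall fun s ↦ by simp [abs_of_nonneg (hψ0 _), hψC])
  have hρ : hψf.toLp _ ∈ coneC :=
    ⟨ψ ∘ g, hψ.comp_monotoneOn hg_mono, fun x _ ↦ hψ0 _, hψf.coeFn_toLp.trans (hfg.fun_comp ψ)⟩
  have hpair := hι _ hρ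
  rw [L2.inner_def] at hpair
  refine hpair.trans_eq (integral_congr_ae ?_)
  filter_upwards [hψf.coeFn_toLp] with s hs
  simp [hs, mul_comm]

theorem stmt9_general (μ ν : Hsp) (hμ : μ ∈ coneC)
    (hdual : ν - μ ∈ dualC)
    (φ : ℝ → ℝ) (hmono : Monotone φ) (hconv : ConvexOn ℝ Set.univ φ)
    (hlip : ∃ K : NNReal, LipschitzWith K φ) :
    ∫ s, φ (μ s) ∂mu0 ≤ ∫ s, φ (ν s) ∂mu0 := by
  obtain ⟨K, hK⟩ := hlip
  set ψ : ℝ → ℝ := fun x ↦ derivWithin φ (Ioi x) x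
  have hψ0 (x : ℝ) : 0 ≤ ψ x := (hmono.monotoneOn _).derivWithin_nonneg
  have hpair : 0 ≤ ∫ s, ψ (μ s) * (ν s - μ s) ∂mu0 := by
    refine (integral_comp_mul_nonneg_of_mem_dualC hdual hμ hconv.monotone_rightDeriv hψ0
      (hconv.rightDeriv_le_of_lipschitzWith hK)).trans_eq (integral_congr_ae ?_)
    filter_upwards [Lp.coeFn_sub ν μ] with s hs
    rw [hs, Pi.sub_apply]
  have hprod : Integrable (fun s ↦ ψ (μ s) * (ν s - μ s)) mu0 :=
    (ν.integrable.sub μ.integrable).bdd_mul (c := K)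
      (hconv.monotone_rightDeriv.comp_aestronglyMeasurable (Lp.aestronglyMeasurable μ))
      (Filter.Eventually.of_forall fun s ↦ by
        rw [Real.norm_of_nonneg (hψ0 _)]
        exact hconv.rightDeriv_le_of_lipschitzWith hK _)
  have hφμ := hK.integrable_comp μ.integrable
  have hφν := hK.integrable_comp ν.integrable
  calc ∫ s, φ (μ s) ∂mu0 ≤ ∫ s, φ (μ s) ∂mu0 + ∫ s, ψ (μ s) * (ν s - μ s) ∂mu0 :=
        le_add_of_nonneg_right hpair
    _ = ∫ s, (φ (μ s) + ψ (μ s) * (ν s - μ s)) ∂mu0 :=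
        (integral_add hφμ hprod).symm
    _ ≤ ∫ s, φ (ν s) ∂mu0 :=
        integral_mono (hφμ.add hprod) hφν fun s ↦ hconv.add_rightDeriv_mul_sub_le _ _

theorem stmt9 (μ ν : Hsp) (hμ : μ ∈ coneC) (hν : ν ∈ coneC)
    (hdual : ν - μ ∈ dualC)
    (φ : ℝ → ℝ) (hmono : Monotone φ) (hconv : ConvexOn ℝ Set.univ φ)
    (hlip : ∃ K : NNReal, LipschitzWith K φ) :
    ∫ s, φ (μ s) ∂mu0 ≤ ∫ s, φ (ν s) ∂mu0 :=
  stmt9_general μ ν hμ hdual φ hmono hconv hlip
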